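/- Let Ω be a bounded domain in ℝ^d and let w : Ω → ℝ^d be a Lipschitz vector field vanishing on the boundary (i.e., w ∈ W^{1,∞}_0(Ω)^d), and Δt > 0. If Δt·L < 1, where L is the Lipschitz constant of w, then the map X₁(x) = x − Δt·w(x) is a bijection from Ω onto Ω. -/

import Mathlib

/-!
`x ↦ x - Δt • w x` is the identity minus the contraction `Δt • w`, hence a bijection of the whole
space: the preimages of `y` are exactly the fixed points of the contraction `z ↦ y + Δt • w z`,
of which there is exactly one. Since `w` vanishes off `Ω`, the map fixes every point of `Ωᶜ`, so
being bijective it must also carry `Ω` onto itself.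
-/

open Function Set

theorem Function.Bijective.bijOn_of_eqOn_compl {α : Type*} {f : α → α} {s : Set α}
    (hf : Bijective f) (hfix : EqOn f id sᶜ) : BijOn f s s := by
  have himage : f '' s = s := by
    rw [← compl_compl (f '' s), ← image_compl_eq hf, hfix.image_eq_self, compl_compl]
  simpa only [himage] using hf.injective.injOn.bijOn_image (s := s)

theorem ContractingWith.bijective_id_sub {E : Type*} [NormedAddCommGroup E] [CompleteSpace E]
    {K : NNReal} {g : E → E} (hg : ContractingWith K g) : Bijective fun x => x - g x := by
  refine bijective_iff_existsUnique _ |>.mpr fun y => ?_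
  have hshift : ContractingWith K fun z => y + g z :=
    ⟨hg.1, by simpa [comp_def] using (isometry_add_left y).lipschitz.comp hg.2⟩
  have hpre : ∀ x, x - g x = y ↔ IsFixedPt (fun z => y + g z) x := fun x => by
    rw [sub_eq_iff_eq_add, IsFixedPt, eq_comm]
  exact ⟨fixedPoint _ hshift, (hpre _).mpr (fixedPoint_isFixedPt hshift),
    fun x hx => hshift.fixedPoint_unique ((hpre x).mp hx)⟩

theorem stmt_0_general {d : ℕ} (Ω : Set (EuclideanSpace ℝ (Fin d)))
    (w : EuclideanSpace ℝ (Fin d) → EuclideanSpace ℝ (Fin d))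
    (L : NNReal) (hw : LipschitzWith L w)
    (hw0 : ∀ x ∉ Ω, w x = 0)
    (Δt : ℝ) (hΔt : 0 < Δt) (hcond : Δt * (L : ℝ) < 1) :
    Set.BijOn (fun x => x - Δt • w x) Ω Ω := by
  have hcontr : ContractingWith (‖Δt‖₊ * L) fun x => Δt • w x := by
    refine ⟨?_, (lipschitzWith_smul Δt).comp hw⟩
    rw [← NNReal.coe_lt_coe, NNReal.coe_mul, coe_nnnorm, Real.norm_of_nonneg hΔt.le]
    exact hcond
  refine hcontr.bijective_id_sub.bijOn_of_eqOn_compl fun x hx => ?_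
  simp [hw0 x hx]

/-- If `w` is Lipschitz with constant `L`, vanishes outside the bounded open set `Ω`,
and `Δt * L < 1`, then `x ↦ x - Δt • w x` maps `Ω` bijectively onto `Ω`. -/
theorem stmt_0 {d : ℕ} (Ω : Set (EuclideanSpace ℝ (Fin d)))
    (hΩopen : IsOpen Ω) (hΩbdd : Bornology.IsBounded Ω)
    (w : EuclideanSpace ℝ (Fin d) → EuclideanSpace ℝ (Fin d))
    (L : NNReal) (hw : LipschitzWith L w)
    (hw0 : ∀ x ∉ Ω, w x = 0)
    (Δt : ℝ) (hΔt : 0 < Δt) (hcond : Δt * (L : ℝ) < 1) :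
    Set.BijOn (fun x => x - Δt • w x) Ω Ω :=
  stmt_0_general Ω w L hw hw0 Δt hΔt hcond
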